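/- For Z(s,t) = π (s cosh(πt/6) - π sinh(πt/6)) / (π cosh(πt/6) - s sinh(πt/6)), one has ∂Z/∂s (s,t) = π^2 / (π cosh(πt/6) - s sinh(πt/6))^2, and moreover exp((1/3)∫_0^t Z(s,t') dt') = π^2 / (π cosh(πt/6) - s sinh(πt/6))^2 for s ∈ [-π, π], t ∈ ℝ. -/

import Mathlib

open Real

noncomputable def Zchar (s t : ℝ) : ℝ :=
  π * (s * Real.cosh (π * t / 6) - π * Real.sinh (π * t / 6)) /
    (π * Real.cosh (π * t / 6) - s * Real.sinh (π * t / 6))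

/-!
In `s`, `Zchar s t` is a Möbius transformation whose matrix
`!![π cosh, -π² sinh; -sinh, π cosh]` has determinant `π² (cosh² - sinh²) = π²`, which gives the
`s`-derivative. In `t`, writing `D(t) = π cosh(πt/6) - s sinh(πt/6)`, one has `Zchar s t = -6 D'(t)/D(t)`;
for `|s| ≤ π` the denominator `D` never vanishes, so `∫₀ᵗ Zchar = -6 log (D t / D 0)` with `D 0 = π`,
and exponentiating `1/3` of it gives `(π / D t)²`.
-/

lemma abs_sinh_lt_cosh (x : ℝ) : |sinh x| < cosh x :=
  abs_lt_of_sq_lt_sq (by linarith [cosh_sq x]) (cosh_pos x).le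

lemma mul_cosh_sub_mul_sinh_pos {a b : ℝ} (hb : |b| ≤ a) (ha : 0 < a) (x : ℝ) :
    0 < a * cosh x - b * sinh x := by
  have : b * sinh x < a * cosh x :=
    calc b * sinh x ≤ |b| * |sinh x| := (le_abs_self _).trans (abs_mul _ _).le
      _ ≤ a * |sinh x| := by gcongr
      _ < a * cosh x := mul_lt_mul_of_pos_left (abs_sinh_lt_cosh x) ha
  linarith

lemma hasDerivAt_div_affine (a b c d : ℝ) {x : ℝ} (h : c * x + d ≠ 0) :
    HasDerivAt (fun x => (a * x + b) / (c * x + d)) ((a * d - b * c) / (c * x + d) ^ 2) x :=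
  (((hasDerivAt_const_mul a).add_const b).fun_div
    ((hasDerivAt_const_mul c).add_const d) h).congr_deriv (by ring)

lemma hasDerivAt_log_mul_cosh_sub_mul_sinh (a b k t : ℝ)
    (h : a * cosh (k * t) - b * sinh (k * t) ≠ 0) :
    HasDerivAt (fun t => log (a * cosh (k * t) - b * sinh (k * t)))
      (k * (a * sinh (k * t) - b * cosh (k * t)) / (a * cosh (k * t) - b * sinh (k * t))) t := by
  have hk : HasDerivAt (fun t => k * t) k t := hasDerivAt_const_mul k
  have hD : HasDerivAt (fun t => a * cosh (k * t) - b * sinh (k * t))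
      (k * (a * sinh (k * t) - b * cosh (k * t))) t := by
    refine ((((hasDerivAt_cosh _).comp t hk).const_mul a).sub
      (((hasDerivAt_sinh _).comp t hk).const_mul b)).congr_deriv ?_
    ring
  exact hD.log h

section Zchar

variable {s : ℝ}

lemma hasDerivAt_Zchar_left (t : ℝ)
    (h : π * cosh (π * t / 6) - s * sinh (π * t / 6) ≠ 0) :
    HasDerivAt (fun s => Zchar s t)
      (π ^ 2 / (π * cosh (π * t / 6) - s * sinh (π * t / 6)) ^ 2) s := by
  unfold Zchar
  set c := cosh (π * t / 6)
  set sh := sinh (π * t / 6)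
  have hmobius : (fun s => π * (s * c - π * sh) / (π * c - s * sh)) =
      fun s => (π * c * s + -(π * π * sh)) / (-sh * s + π * c) :=
    funext fun s => by congr 1 <;> ring
  have hdet : c ^ 2 - sh ^ 2 = 1 := cosh_sq_sub_sinh_sq _
  rw [hmobius]
  refine (hasDerivAt_div_affine _ _ _ _ fun h0 => h (by linarith)).congr_deriv ?_
  rw [show -sh * s + π * c = π * c - s * sh by ring]
  congr 1
  linear_combination π ^ 2 * hdet

lemma Zchar_eq_neg_six_mul_logDeriv (t : ℝ) :
    Zchar s t = -6 * ((π / 6) * (π * sinh (π / 6 * t) - s * cosh (π / 6 * t)) /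
      (π * cosh (π / 6 * t) - s * sinh (π / 6 * t))) := by
  unfold Zchar
  rw [show π * t / 6 = π / 6 * t by ring, ← mul_div_assoc]
  congr 1
  ring

lemma integral_Zchar (hs : |s| ≤ π) (t : ℝ) :
    ∫ t' in (0 : ℝ)..t, Zchar s t' =
      -6 * (log (π * cosh (π * t / 6) - s * sinh (π * t / 6)) - log π) := by
  have hD : ∀ x : ℝ, 0 < π * cosh x - s * sinh x := mul_cosh_sub_mul_sinh_pos hs pi_pos
  have hF : ∀ x, HasDerivAt (fun t => -6 * log (π * cosh (π / 6 * t) - s * sinh (π / 6 * t)))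
      (Zchar s x) x := fun x => by
    rw [Zchar_eq_neg_six_mul_logDeriv]
    exact (hasDerivAt_log_mul_cosh_sub_mul_sinh _ _ _ _ (hD _).ne').const_mul _
  have hcont : Continuous (Zchar s) :=
    Continuous.div (by fun_prop) (by fun_prop) fun x => (hD _).ne'
  rw [intervalIntegral.integral_eq_sub_of_hasDerivAt (fun x _ => hF x)
    (hcont.intervalIntegrable 0 t)]
  simp only [mul_zero, cosh_zero, sinh_zero, mul_one, sub_zero, div_mul_eq_mul_div, mul_comm π t]
  ring

end Zchar

theorem characteristic_curves_derivative :
    ∀ s ∈ Set.Icc (-π) π, ∀ t : ℝ,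
      HasDerivAt (fun s => Zchar s t)
        (π ^ 2 / (π * Real.cosh (π * t / 6) - s * Real.sinh (π * t / 6)) ^ 2) s ∧
      Real.exp ((1 / 3) * ∫ t' in (0 : ℝ)..t, Zchar s t')
        = π ^ 2 / (π * Real.cosh (π * t / 6) - s * Real.sinh (π * t / 6)) ^ 2 := by
  intro s hs t
  have hs_abs : |s| ≤ π := abs_le.mpr hs
  have hD := mul_cosh_sub_mul_sinh_pos hs_abs pi_pos (π * t / 6)
  refine ⟨hasDerivAt_Zchar_left t hD.ne', ?_⟩
  have hexponent : (1 / 3 : ℝ) * (-6 * (log (π * cosh (π * t / 6) - s * sinh (π * t / 6)) - log π))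
      = log ((π / (π * cosh (π * t / 6) - s * sinh (π * t / 6))) ^ 2) := by
    rw [log_pow, log_div pi_ne_zero hD.ne']
    push_cast
    ring
  rw [integral_Zchar hs_abs, hexponent, exp_log (by positivity), div_pow]
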